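/- Let F be a field and let M be an invertible n×n matrix over F. Then there exist unitriangular matrices U, V ∈ T_n(F) such that U·M·V is an invertible rook matrix, that is, a matrix having exactly one nonzero entry in each row and exactly one nonzero entry in each column (a monomial matrix). -/

import Mathlib

/-!
Sweep the columns from left to right, keeping every processed column with an isolated pivot
(the only nonzero entry of its row and of its column). In the next column take the lowest
nonzero entry: its row meets no earlier pivot, so it vanishes to the left. Adding multiples of
its row to the rows above (an upper unitriangular left factor) and of its column to the columns
to the right (an upper unitriangular right factor) isolates it without touching the earlier
pivots. Once every column has an isolated pivot, invertibility puts a pivot in every row too.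
-/

/-- A square matrix is unitriangular if it is upper triangular with 1's on the diagonal. -/
def Matrix.IsUnitriangular {n : ℕ} {R : Type*} [Zero R] [One R]
    (A : Matrix (Fin n) (Fin n) R) : Prop :=
  (∀ i, A i i = 1) ∧ ∀ i j : Fin n, j < i → A i j = 0

/-- A matrix is a rook matrix if every row and every column contains
at most one nonzero entry. -/
def Matrix.IsRook {n m : ℕ} {F : Type*} [Zero F]
    (R : Matrix (Fin n) (Fin m) F) : Prop :=
  (∀ i j j', R i j ≠ 0 → R i j' ≠ 0 → j = j') ∧
  (∀ i i' j, R i j ≠ 0 → R i' j ≠ 0 → i = i')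

namespace Matrix

variable {n : ℕ} {m m' R : Type*}

theorem IsUnitriangular.isUpperTriangular [Zero R] [One R] {A : Matrix (Fin n) (Fin n) R}
    (hA : A.IsUnitriangular) : A.IsUpperTriangular :=
  fun i j hij => hA.2 i j hij

theorem isUnitriangular_one [Zero R] [One R] : (1 : Matrix (Fin n) (Fin n) R).IsUnitriangular :=
  ⟨fun _ => one_apply_eq _, fun _ _ hji => one_apply_ne hji.ne'⟩

theorem IsUnitriangular.mul [NonAssocSemiring R] {A B : Matrix (Fin n) (Fin n) R}
    (hA : A.IsUnitriangular) (hB : B.IsUnitriangular) : (A * B).IsUnitriangular := by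
  refine ⟨fun i => ?_, hA.isUpperTriangular.mul hB.isUpperTriangular⟩
  rw [mul_apply, Finset.sum_eq_single i (fun l _ hl => ?_) (by simp), hA.1, hB.1, one_mul]
  rcases hl.lt_or_gt with h | h
  · rw [hA.2 i l h, zero_mul]
  · rw [hB.2 l i h, mul_zero]

theorem IsUnitriangular.det_eq_one [CommRing R] {A : Matrix (Fin n) (Fin n) R}
    (hA : A.IsUnitriangular) : A.det = 1 := by
  simp [det_of_isUpperTriangular hA.isUpperTriangular, hA.1]

theorem IsUnitriangular.isUnit [CommRing R] {A : Matrix (Fin n) (Fin n) R}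
    (hA : A.IsUnitriangular) : IsUnit A :=
  (isUnit_iff_isUnit_det A).2 (by simp [hA.det_eq_one])

theorem isUnitriangular_one_add_vecMulVec [NonAssocSemiring R] {u v : Fin n → R}
    (h : ∀ i j, j ≤ i → u i * v j = 0) : (1 + vecMulVec u v).IsUnitriangular :=
  ⟨fun i => by simp [vecMulVec_apply, h i i le_rfl],
    fun i j hji => by simp [vecMulVec_apply, one_apply_ne hji.ne', h i j hji.le]⟩

theorem isUnitriangular_one_add_vecMulVec_single [NonAssocSemiring R] {u : Fin n → R}
    {r : Fin n} (hu : ∀ i, r ≤ i → u i = 0) :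
    (1 + vecMulVec u (Pi.single r 1)).IsUnitriangular := by
  refine isUnitriangular_one_add_vecMulVec fun i j hji => ?_
  rcases eq_or_ne j r with rfl | hjr
  · simp [hu i hji]
  · simp [hjr]

theorem isUnitriangular_one_add_single_vecMulVec [NonAssocSemiring R] {v : Fin n → R}
    {c : Fin n} (hv : ∀ j, j ≤ c → v j = 0) :
    (1 + vecMulVec (Pi.single c 1) v).IsUnitriangular := by
  refine isUnitriangular_one_add_vecMulVec fun i j hji => ?_
  rcases eq_or_ne i c with rfl | hic
  · simp [hv j hji]
  · simp [hic]

theorem one_add_vecMulVec_single_mul [Fintype m] [DecidableEq m] [Semiring R]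
    (u : m → R) (r : m) (B : Matrix m m R) :
    (1 + vecMulVec u (Pi.single r 1)) * B = B + vecMulVec u (B.row r) := by
  rw [add_mul, one_mul, vecMulVec_mul, single_one_vecMul]

theorem mul_one_add_single_vecMulVec [Fintype m] [DecidableEq m] [Semiring R]
    (B : Matrix m m R) (c : m) (v : m → R) :
    B * (1 + vecMulVec (Pi.single c 1) v) = B + vecMulVec (B.col c) v := by
  rw [mul_add, mul_one, mul_vecMulVec, mulVec_single_one]

section IsolatedEntry

variable [Zero R]

def IsIsolatedEntry (B : Matrix m m' R) (i : m) (j : m') : Prop :=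
  B i j ≠ 0 ∧ (∀ i', i' ≠ i → B i' j = 0) ∧ ∀ j', j' ≠ j → B i j' = 0

variable {B C : Matrix m m' R} {i : m} {j : m'}

theorem IsIsolatedEntry.existsUnique_row (h : IsIsolatedEntry B i j) : ∃! j', B i j' ≠ 0 :=
  ⟨j, h.1, fun j' hj' => by_contra fun hne => hj' (h.2.2 j' hne)⟩

theorem IsIsolatedEntry.existsUnique_col (h : IsIsolatedEntry B i j) : ∃! i', B i' j ≠ 0 :=
  ⟨i, h.1, fun i' hi' => by_contra fun hne => hi' (h.2.1 i' hne)⟩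

theorem IsIsolatedEntry.congr (h : IsIsolatedEntry B i j) (hrow : ∀ j', C i j' = B i j')
    (hcol : ∀ i', C i' j = B i' j) : IsIsolatedEntry C i j := by
  simp only [IsIsolatedEntry, hrow, hcol]
  exact h

end IsolatedEntry

theorem exists_ne_zero_in_row_of_isUnit [Fintype m] [DecidableEq m] [CommRing R] [Nontrivial R]
    {A : Matrix m m R} (hA : IsUnit A) (i : m) : ∃ j, A i j ≠ 0 := by
  by_contra! h
  simpa [det_eq_zero_of_row_eq_zero i h] using (isUnit_iff_isUnit_det A).1 hA

theorem exists_ne_zero_in_col_of_isUnit [Fintype m] [DecidableEq m] [CommRing R] [Nontrivial R]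
    {A : Matrix m m R} (hA : IsUnit A) (j : m) : ∃ i, A i j ≠ 0 := by
  by_contra! h
  simpa [det_eq_zero_of_column_eq_zero j h] using (isUnit_iff_isUnit_det A).1 hA

variable {F : Type*} [Field F]

theorem exists_unitriangular_isIsolatedEntry (B : Matrix (Fin n) (Fin n) F) {r c : Fin n}
    (hrc : B r c ≠ 0) (hbelow : ∀ i, r < i → B i c = 0) (hleft : ∀ j, j < c → B r j = 0) :
    ∃ U V : Matrix (Fin n) (Fin n) F, U.IsUnitriangular ∧ V.IsUnitriangular ∧
      (U * B * V).IsIsolatedEntry r c ∧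
      ∀ p j, p ≠ r → j ≠ c → B.IsIsolatedEntry p j →
        (U * B * V).IsIsolatedEntry p j := by
  -- `U` adds multiples of row `r` to the rows above it, `V` multiples of column `c` to the
  -- columns to its right; the coefficients clear column `c` and row `r` around the pivot.
  set γ : Fin n → F := fun i => if i = r then 0 else -B i c / B r c
  set δ : Fin n → F := fun j => if j = c then 0 else -B r j / B r c
  have hγ : ∀ i, r ≤ i → γ i = 0 := fun i hri => by
    rcases hri.eq_or_lt with rfl | hlt
    · simp [γ]
    · simp [γ, hbelow i hlt]
  have hδ : ∀ j, j ≤ c → δ j = 0 := fun j hjc => by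
    rcases hjc.eq_or_lt with rfl | hlt
    · simp [δ]
    · simp [δ, hleft j hlt]
  have hcol : ∀ i, (B + vecMulVec γ (B.row r)) i c = if i = r then B r c else 0 := by
    intro i
    rcases eq_or_ne i r with rfl | hir
    · simp [vecMulVec_apply, hγ i le_rfl]
    · simp [vecMulVec_apply, γ, hir, hrc]
  have hentry : ∀ i j,
      ((1 + vecMulVec γ (Pi.single r 1)) * B * (1 + vecMulVec (Pi.single c 1) δ)) i j =
        B i j + γ i * B r j + (if i = r then B r c else 0) * δ j := by
    intro i j
    rw [one_add_vecMulVec_single_mul, mul_one_add_single_vecMulVec]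
    simp [vecMulVec_apply, hcol]
  refine ⟨_, _, isUnitriangular_one_add_vecMulVec_single hγ,
    isUnitriangular_one_add_single_vecMulVec hδ, ⟨?_, fun i hi => ?_, fun j hj => ?_⟩, ?_⟩
  · simpa [hentry, hγ r le_rfl, hδ c le_rfl] using hrc
  · simp [hentry, hδ c le_rfl, hi, γ, hrc]
  · simp [hentry, hγ r le_rfl, hj, δ, mul_div_cancel₀ _ hrc]
  · intro p j hpr hjc hpj
    have hγp : γ p = 0 := by simp [γ, hpj.2.2 c hjc.symm]
    have hδj : δ j = 0 := by simp [δ, hpj.2.1 r hpr.symm]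
    refine hpj.congr (fun j' => ?_) (fun i => ?_)
    · simp [hentry, hγp, hpr]
    · simp [hentry, hδj, hpj.2.1 r hpr.symm]

theorem exists_unitriangular_forall_lt_isIsolatedEntry {M : Matrix (Fin n) (Fin n) F}
    (hM : IsUnit M) (k : ℕ) :
    ∃ U V : Matrix (Fin n) (Fin n) F, U.IsUnitriangular ∧ V.IsUnitriangular ∧
      ∀ j : Fin n, (j : ℕ) < k → ∃ i, (U * M * V).IsIsolatedEntry i j := by
  induction k with
  | zero => exact ⟨1, 1, isUnitriangular_one, isUnitriangular_one, by simp⟩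
  | succ k ih =>
    obtain ⟨U, V, hU, hV, hiso⟩ := ih
    by_cases hk : k < n
    swap
    · exact ⟨U, V, hU, hV, fun j _ => hiso j (by omega)⟩
    set c : Fin n := ⟨k, hk⟩
    set B := U * M * V
    obtain ⟨r, hrc, hbelow⟩ : ∃ r, B r c ≠ 0 ∧ ∀ i, r < i → B i c = 0 := by
      classical
      have hB : IsUnit B := (hU.isUnit.mul hM).mul hV.isUnit
      obtain ⟨i, hi⟩ := exists_ne_zero_in_col_of_isUnit hB c
      obtain ⟨r, hr, hmax⟩ :=
        Finset.exists_max_image {i | B i c ≠ 0} id ⟨i, by simpa using hi⟩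
      refine ⟨r, by simpa using hr, fun i hri => ?_⟩
      by_contra hi
      exact (hmax i (by simpa using hi)).not_gt hri
    have hpivot_ne : ∀ j < c, ∀ p, B.IsIsolatedEntry p j → p ≠ r := by
      rintro j hj p hp rfl
      exact hrc (hp.2.2 c hj.ne')
    have hleft : ∀ j < c, B r j = 0 := by
      intro j hj
      obtain ⟨p, hp⟩ := hiso j hj
      exact hp.2.1 r (hpivot_ne j hj p hp).symm
    obtain ⟨U₁, V₁, hU₁, hV₁, hrc_iso, hkeep⟩ :=
      exists_unitriangular_isIsolatedEntry B hrc hbelow hleft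
    refine ⟨U₁ * U, V * V₁, hU₁.mul hU, hV.mul hV₁, fun j hj => ?_⟩
    rw [show U₁ * U * M * (V * V₁) = U₁ * B * V₁ by simp only [B, Matrix.mul_assoc]]
    rcases Nat.lt_succ_iff_lt_or_eq.mp hj with hj | hj
    · obtain ⟨p, hp⟩ := hiso j hj
      exact ⟨p, hkeep p j (hpivot_ne j hj p hp) (Fin.ne_of_lt hj) hp⟩
    · exact ⟨r, (Fin.ext hj : j = c) ▸ hrc_iso⟩

end Matrix

/-- Enhanced Bruhat decomposition for an invertible matrix: `U * M * V` can be made a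
monomial matrix (exactly one nonzero entry in each row and each column) with `U`, `V`
unitriangular. -/
theorem enhanced_bruhat_invertible {F : Type*} [Field F] {n : ℕ}
    (M : Matrix (Fin n) (Fin n) F) (hM : IsUnit M) :
    ∃ U V : Matrix (Fin n) (Fin n) F,
      U.IsUnitriangular ∧ V.IsUnitriangular ∧
      (∀ i, ∃! j, (U * M * V) i j ≠ 0) ∧
      (∀ j, ∃! i, (U * M * V) i j ≠ 0) := by
  obtain ⟨U, V, hU, hV, hiso⟩ := Matrix.exists_unitriangular_forall_lt_isIsolatedEntry hM n
  have hpivot : ∀ j, ∃ i, (U * M * V).IsIsolatedEntry i j := fun j => hiso j j.isLt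
  have hUMV : IsUnit (U * M * V) := (hU.isUnit.mul hM).mul hV.isUnit
  refine ⟨U, V, hU, hV, fun i => ?_, fun j => ?_⟩
  · obtain ⟨j, hj⟩ := Matrix.exists_ne_zero_in_row_of_isUnit hUMV i
    obtain ⟨p, hp⟩ := hpivot j
    obtain rfl : i = p := hp.existsUnique_col.unique hj hp.1
    exact hp.existsUnique_row
  · obtain ⟨p, hp⟩ := hpivot j
    exact hp.existsUnique_col
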